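/- arXiv:1402.0304 — 7 statements merged into one kernel-verified Lean document; each statement's English description precedes it below -/
import Mathlib

section
/- For t > 1/2 the mutation ℍ_(t) has no zero divisors: if c ∘ z = 0 with c ≠ 0 then z = 0, where c ∘ z = t·(c·z) + (1−t)·(z·c). -/
open Quaternion

/-- For `t > 1/2` the mutation `ℍ_(t)` has no zero divisors. -/
theorem stmt4 (t : ℝ) (ht : 1 / 2 < t) (c z : ℍ[ℝ]) (hc : c ≠ 0)
    (h : t • (c * z) + (1 - t) • (z * c) = 0) : z = 0 := by
  by_contra hz
  have h1 : t • (c * z) = -((1 - t) • (z * c)) :=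
    eq_neg_of_add_eq_zero_left h
  have hn := congrArg norm h1
  rw [norm_neg, norm_smul, norm_smul, norm_mul, norm_mul] at hn
  have hc' : (0:ℝ) < ‖c‖ := norm_pos_iff.mpr hc
  have hz' : (0:ℝ) < ‖z‖ := norm_pos_iff.mpr hz
  rw [Real.norm_eq_abs, Real.norm_eq_abs] at hn
  have ht' : |t| = |1 - t| := by nlinarith [mul_pos hc' hz']
  rcases abs_cases (1 - t) with ⟨h2, _⟩ | ⟨h2, _⟩ <;>
    rw [abs_of_pos (by linarith : (0:ℝ) < t)] at ht' <;> linarith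
end

section
/- For every real r, the Spin multiplication on the quaternions, defined by c ∘ z = c·z + 2r·(c₂·z₃ − c₃·z₂) where cₘ, zₘ denote the coefficients of the basis elements in c and z, has no zero divisors: if c ≠ 0 and c ∘ z = 0, then z = 0. -/
open Quaternion

/-- The Spin multiplication `c ∘ z = c·z + 2r(c₂z₃ − c₃z₂)` on the quaternions. -/
noncomputable def spinMul (r : ℝ) (c z : ℍ[ℝ]) : ℍ[ℝ] :=
  c * z + ((2 * r * (c.imJ * z.imK - c.imK * z.imJ) : ℝ) : ℍ[ℝ])

/-!
The correction term `2r(c₂z₃ − c₃z₂)` is `r` times the `i`-coefficient of the commutator `c·z − z·c`.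
If `c ∘ z = 0`, then `c·z` is real, hence commutes with `c`; cancelling `c` shows that `z` itself
commutes with `c`. So the correction term vanishes, `c·z = 0`, and `z = 0` since `ℍ` is a division
ring.
-/

theorem Quaternion.imI_mul_sub_mul {R : Type*} [CommRing R] (c z : ℍ[R]) :
    (c * z - z * c).imI = 2 * (c.imJ * z.imK - c.imK * z.imJ) := by
  simp only [Quaternion.imI_sub, Quaternion.imI_mul]
  ring

theorem Commute.of_mul_right_self {M₀ : Type*} [MonoidWithZero M₀] [IsLeftCancelMulZero M₀]
    {c z : M₀} (hc : c ≠ 0) (h : Commute c (c * z)) : Commute c z :=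
  mul_left_cancel₀ hc <| by rw [h.eq, mul_assoc]

/-- For every real `r`, the Spin multiplication has no zero divisors. -/
theorem stmt5 (r : ℝ) (c z : ℍ[ℝ]) (hc : c ≠ 0) (h : spinMul r c z = 0) : z = 0 := by
  set s : ℝ := 2 * r * (c.imJ * z.imK - c.imK * z.imJ) with hs
  have hcz : c * z = ((-s : ℝ) : ℍ[ℝ]) := by
    rw [Quaternion.coe_neg, ← add_eq_zero_iff_eq_neg]
    exact h
  have hcomm : Commute c z :=
    .of_mul_right_self hc (hcz ▸ (Quaternion.coe_commute (-s) c).symm)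
  have hs0 : s = 0 := by
    have := Quaternion.imI_mul_sub_mul c z
    rw [hcomm.eq, sub_self, Quaternion.imI_zero] at this
    rw [hs]
    linear_combination -r * this
  rw [hs0, neg_zero, Quaternion.coe_zero] at hcz
  exact (mul_eq_zero.1 hcz).resolve_left hc
end

section
/- The map κ : z ↦ k⁻¹·conj(z)·k (conjugation composed with conjugation by the quaternion unit k) is an involutorial anti-automorphism of the Spin algebra (ℍ, +, ∘): κ is additive, κ∘κ = id, and κ(c ∘ z) = κ(z) ∘ κ(c) for all quaternions c, z. -/
open Quaternion

/-- The quaternion unit `k`. -/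
def qk : ℍ[ℝ] := ⟨0, 0, 0, 1⟩

/-- The map `κ : z ↦ k⁻¹ · conj z · k`. -/
noncomputable def spinKappa (z : ℍ[ℝ]) : ℍ[ℝ] := qk⁻¹ * star z * qk

/-!
`κ` is `star` followed by the inner automorphism `z ↦ k⁻¹ z k`, hence a ring anti-automorphism
of `ℍ`. In coordinates it only negates `z₃`, so it fixes the reals and `z₂`; this turns the
correction term `c₂z₃ − c₃z₂` of `c ∘ z` into that of `κ z ∘ κ c`.
-/

@[simp] lemma qk_re : qk.re = 0 := rfl

@[simp] lemma qk_imI : qk.imI = 0 := rfl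

@[simp] lemma qk_imJ : qk.imJ = 0 := rfl

@[simp] lemma qk_imK : qk.imK = 1 := rfl

lemma qk_inv : qk⁻¹ = -qk :=
  inv_eq_of_mul_eq_one_right <| by ext <;> simp [re_mul, imI_mul, imJ_mul, imK_mul]

lemma spinKappa_mul (c z : ℍ[ℝ]) : spinKappa (c * z) = spinKappa z * spinKappa c := by
  have hk : qk ≠ 0 := fun h => by simpa [qk] using congrArg QuaternionAlgebra.imK h
  simp only [spinKappa, star_mul, mul_assoc, mul_inv_cancel_left₀ hk]

section Components

variable (z : ℍ[ℝ])

@[simp] lemma spinKappa_re : (spinKappa z).re = z.re := by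
  rw [spinKappa, qk_inv]; simp [re_mul, imI_mul, imJ_mul, imK_mul]

@[simp] lemma spinKappa_imI : (spinKappa z).imI = z.imI := by
  rw [spinKappa, qk_inv]; simp [re_mul, imI_mul, imJ_mul, imK_mul]

@[simp] lemma spinKappa_imJ : (spinKappa z).imJ = z.imJ := by
  rw [spinKappa, qk_inv]; simp [re_mul, imI_mul, imJ_mul, imK_mul]

@[simp] lemma spinKappa_imK : (spinKappa z).imK = -z.imK := by
  rw [spinKappa, qk_inv]; simp [re_mul, imI_mul, imJ_mul, imK_mul]

end Components

lemma spinKappa_add (z w : ℍ[ℝ]) : spinKappa (z + w) = spinKappa z + spinKappa w := by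
  ext <;> simp [add_comm]

lemma spinKappa_involutive : Function.Involutive spinKappa := fun z => by
  ext <;> simp

lemma spinKappa_coe (a : ℝ) : spinKappa a = a := by
  ext <;> simp

/-- `κ : z ↦ conj(z)^k` is an involutorial anti-automorphism of the Spin algebra. -/
theorem stmt7 (r : ℝ) :
    (∀ z w : ℍ[ℝ], spinKappa (z + w) = spinKappa z + spinKappa w) ∧
    (∀ z : ℍ[ℝ], spinKappa (spinKappa z) = z) ∧
    (∀ c z : ℍ[ℝ], spinKappa (spinMul r c z) = spinMul r (spinKappa z) (spinKappa c)) := by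
  refine ⟨spinKappa_add, spinKappa_involutive, fun c z => ?_⟩
  rw [spinMul, spinMul, spinKappa_add, spinKappa_mul, spinKappa_coe]
  simp only [spinKappa_imJ, spinKappa_imK]
  congr 2
  ring
end

section
/- For 0 < ϑ < π, the Rees algebra multiplication on ℂ² given by (a,b) ∘ (x,y) = (a·x + e^{iϑ}·y·conj(b), x·b + conj(a)·y) has no zero divisors: if (a,b) ≠ (0,0) and (a,b) ∘ (x,y) = (0,0), then (x,y) = (0,0). -/
/-- For `0 < θ < π`, the Rees algebra multiplication
`(a,b) ∘ (x,y) = (a·x + e^{iθ}·y·conj b, x·b + conj a·y)` on `ℂ²` has no zero divisors. -/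
theorem stmt8 (θ : ℝ) (hθ1 : 0 < θ) (hθ2 : θ < Real.pi) (a b x y : ℂ)
    (hab : ¬(a = 0 ∧ b = 0))
    (h1 : a * x + Complex.exp (θ * Complex.I) * y * (starRingEnd ℂ) b = 0)
    (h2 : x * b + (starRingEnd ℂ) a * y = 0) :
    x = 0 ∧ y = 0 := by
  set D : ℂ := a * (starRingEnd ℂ) a - Complex.exp (θ * Complex.I) * b * (starRingEnd ℂ) b
    with hD
  have hsin : 0 < Real.sin θ := Real.sin_pos_of_pos_of_lt_pi hθ1 hθ2
  have hDne : D ≠ 0 := by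
    by_cases hb : b = 0
    · have ha : a ≠ 0 := fun h => hab ⟨h, hb⟩
      simpa [hD, hb, Complex.mul_conj, Complex.normSq_eq_zero] using ha
    · intro h0
      have him : D.im = -(Real.sin θ * Complex.normSq b) := by
        rw [hD, mul_assoc, Complex.mul_conj, Complex.mul_conj]
        simp [Complex.sub_im, Complex.mul_im, Complex.exp_ofReal_mul_I_im]
      have : D.im < 0 := by
        rw [him]
        have : 0 < Complex.normSq b := Complex.normSq_pos.mpr hb
        nlinarith
      rw [h0] at this
      simp at this
  have hx : D * x = 0 := by
    linear_combination (starRingEnd ℂ) a * h1 - Complex.exp (θ * Complex.I) * (starRingEnd ℂ) b * h2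
  have hy : D * y = 0 := by
    linear_combination a * h2 - b * h1
  exact ⟨by rcases mul_eq_zero.mp hx with h | h; exact absurd h hDne; exact h,
         by rcases mul_eq_zero.mp hy with h | h; exact absurd h hDne; exact h⟩
end

section
/- For the Moulton multiplication with parameter k > 1, defined by s ∘ x = s·x if s ≥ 0 or x ≥ 0, and s ∘ x = k·s·x if s < 0 and x < 0: for any two distinct slopes s ≠ s' and any t, t' ∈ ℝ, the equation s ∘ x + t = s' ∘ x + t' has exactly one real solution x. -/
open scoped Classical

/-- The Moulton multiplication with parameter `k`. -/
noncomputable def moultonMul (k s x : ℝ) : ℝ := if s < 0 ∧ x < 0 then k * s * x else s * x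

private lemma gmono {k : ℝ} (hk : 1 < k) :
    StrictMono (fun s : ℝ => if s < 0 then k * s else s) := by
  intro u v huv
  by_cases hu : u < 0 <;> by_cases hv : v < 0 <;> simp [hu, hv]
  · nlinarith
  · push_neg at hv; nlinarith
  · push_neg at hu; nlinarith
  · exact huv

private lemma mm_eq (k s x : ℝ) :
    moultonMul k s x = (if x < 0 then (if s < 0 then k * s else s) else s) * x := by
  unfold moultonMul
  by_cases hs : s < 0 <;> by_cases hx : x < 0 <;> simp [hs, hx]

private lemma unique_pw_pos (a b c : ℝ) (ha : 0 < a) (hb : 0 < b) :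
    ∃! x : ℝ, (if x < 0 then b * x else a * x) = c := by
  rcases le_or_gt 0 c with hc | hc
  · refine ⟨c / a, ?_, ?_⟩
    · have h1 : ¬ (c / a < 0) := not_lt.mpr (div_nonneg hc ha.le)
      simp only [h1, if_false]
      field_simp
    · intro y hy
      by_cases hy0 : y < 0
      · simp only [hy0, if_true] at hy; nlinarith
      · simp only [hy0, if_false] at hy
        rw [eq_div_iff ha.ne']
        linear_combination hy
  · refine ⟨c / b, ?_, ?_⟩
    · have h1 : c / b < 0 := div_neg_of_neg_of_pos hc hb
      simp only [h1, if_true]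
      field_simp
    · intro y hy
      by_cases hy0 : y < 0
      · simp only [hy0, if_true] at hy
        rw [eq_div_iff hb.ne']
        linear_combination hy
      · simp only [hy0, if_false] at hy; push_neg at hy0; nlinarith

private lemma unique_pw (a b c : ℝ) (hab : 0 < a * b) :
    ∃! x : ℝ, (if x < 0 then b * x else a * x) = c := by
  rcases mul_pos_iff.mp hab with ⟨ha, hb⟩ | ⟨ha, hb⟩
  · exact unique_pw_pos a b c ha hb
  · have key : ∀ x : ℝ, ((if x < 0 then b * x else a * x) = c) ↔
        ((if x < 0 then (-b) * x else (-a) * x) = -c) := by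
      intro x
      by_cases hx : x < 0 <;> simp [hx] <;> constructor <;> intro h <;> linarith
    have h := unique_pw_pos (-a) (-b) (-c) (by linarith) (by linarith)
    obtain ⟨x, hx, hu⟩ := h
    exact ⟨x, (key x).mpr hx, fun y hy => hu y ((key y).mp hy)⟩

/-- In the Moulton plane with parameter `k > 1`, two non-vertical lines with
distinct slopes meet in exactly one point. -/
theorem stmt14 (k : ℝ) (hk : 1 < k) (s s' t t' : ℝ) (hss : s ≠ s') :
    ∃! x : ℝ, moultonMul k s x + t = moultonMul k s' x + t' := by
  set g : ℝ → ℝ := fun s => if s < 0 then k * s else s with hg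
  set a := s - s' with ha
  set b := g s - g s' with hbdef
  have hab : 0 < a * b := by
    rcases hss.lt_or_gt with h | h
    · have hgs : g s < g s' := gmono hk h
      have : a < 0 := by simp [ha]; linarith
      have : b < 0 := by simp [hbdef]; linarith
      nlinarith
    · have hgs : g s' < g s := gmono hk h
      have : 0 < a := by simp [ha]; linarith
      have : 0 < b := by simp [hbdef]; linarith
      nlinarith
  have key : ∀ x : ℝ, (moultonMul k s x + t = moultonMul k s' x + t') ↔
      ((if x < 0 then b * x else a * x) = t' - t) := by
    intro x
    rw [mm_eq, mm_eq]
    by_cases hx : x < 0 <;> simp only [hx, if_true, if_false, hbdef, ha, hg, sub_mul] <;>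
      constructor <;> intro h <;> linarith
  obtain ⟨x, hx, hu⟩ := unique_pw a b (t' - t) hab
  exact ⟨x, (key x).mpr hx, fun y hy => hu y ((key y).mp hy)⟩
end

section
/- Let ρ : ℝ → ℝ be an odd increasing bijection with ρ(0) = 0 and ρ(1) = 1, and define τ(s,x,t) = s·x + t for s ≥ 0 and τ(s,x,t) = ρ⁻¹(ρ(s)·ρ(x) + ρ(t)) for s < 0. Then for all slopes s₁ ≠ s₂ and all t₁, t₂ ∈ ℝ, the equation τ(s₁, x, t₁) = τ(s₂, x, t₂) has exactly one real solution x. -/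
open scoped Classical

private lemma mixed15 (ρ : ℝ ≃ ℝ) (hmono : StrictMono ρ) (h0 : ρ 0 = 0)
    (s s' t t' : ℝ) (hs : 0 ≤ s) (hs' : s' < 0) :
    ∃! x : ℝ, s * x + t = ρ.symm (ρ s' * ρ x + ρ t') := by
  have hc : ρ s' < 0 := by rw [← h0]; exact hmono hs'
  set c := ρ s' with hcdef
  have hcontρ : Continuous ρ := (hmono.orderIsoOfSurjective ρ ρ.surjective).continuous
  set φ : ℝ → ℝ := fun x => ρ (s * x + t) - (c * ρ x + ρ t') with hφ
  have hmonoφ : StrictMono φ := by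
    have h1 : Monotone fun x : ℝ => ρ (s * x + t) :=
      hmono.monotone.comp (fun a b hab => by nlinarith)
    have h2 : StrictMono fun x : ℝ => -(c * ρ x + ρ t') := by
      intro a b hab
      have h3 := hmono hab
      have h4 := mul_lt_mul_of_neg_left h3 hc
      simp only
      linarith
    have h5 := h1.add_strictMono h2
    have : φ = fun x => ρ (s * x + t) + -(c * ρ x + ρ t') := by
      funext x; simp [hφ]; ring
    rw [this]; exact h5
  have hcontφ : Continuous φ := by
    apply Continuous.sub
    · exact hcontρ.comp (by continuity)
    · exact ((continuous_const.mul hcontρ).add continuous_const)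
  have hcancel : c * ((ρ t - ρ t') / c) = ρ t - ρ t' := by rw [mul_comm, div_mul_cancel₀ _ hc.ne]
  obtain ⟨a, ha⟩ : ∃ a, φ a ≤ 0 := by
    refine ⟨min 0 (ρ.symm ((ρ t - ρ t') / c)), ?_⟩
    set z := min 0 (ρ.symm ((ρ t - ρ t') / c)) with hz
    have hx0 : z ≤ 0 := min_le_left _ _
    have hρx : ρ z ≤ (ρ t - ρ t') / c := by
      calc ρ z ≤ ρ (ρ.symm ((ρ t - ρ t') / c)) := hmono.monotone (min_le_right _ _)
        _ = (ρ t - ρ t') / c := ρ.apply_symm_apply _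
    have h1 : ρ (s * z + t) ≤ ρ t := hmono.monotone (by nlinarith)
    have h2 : ρ t - ρ t' ≤ c * ρ z := by
      have := mul_le_mul_of_nonpos_left hρx hc.le
      rwa [hcancel] at this
    show ρ (s * z + t) - (c * ρ z + ρ t') ≤ 0
    linarith
  obtain ⟨b, hb⟩ : ∃ b, 0 ≤ φ b := by
    refine ⟨max 0 (ρ.symm ((ρ t - ρ t') / c)), ?_⟩
    set z := max 0 (ρ.symm ((ρ t - ρ t') / c)) with hz
    have hx0 : (0:ℝ) ≤ z := le_max_left _ _
    have hρx : (ρ t - ρ t') / c ≤ ρ z := by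
      calc (ρ t - ρ t') / c = ρ (ρ.symm ((ρ t - ρ t') / c)) := (ρ.apply_symm_apply _).symm
        _ ≤ ρ z := hmono.monotone (le_max_right _ _)
    have h1 : ρ t ≤ ρ (s * z + t) := hmono.monotone (by nlinarith)
    have h2 : c * ρ z ≤ ρ t - ρ t' := by
      have := mul_le_mul_of_nonpos_left hρx hc.le
      rwa [hcancel] at this
    show (0:ℝ) ≤ ρ (s * z + t) - (c * ρ z + ρ t')
    linarith
  obtain ⟨x, hx⟩ : (0:ℝ) ∈ Set.range φ := intermediate_value_univ a b hcontφ ⟨ha, hb⟩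
  have key : ∀ y : ℝ, (s * y + t = ρ.symm (c * ρ y + ρ t')) ↔ φ y = 0 := by
    intro y
    rw [Equiv.eq_symm_apply]
    constructor
    · intro h
      show ρ (s * y + t) - (c * ρ y + ρ t') = 0
      rw [h]; ring
    · intro h
      have h' : ρ (s * y + t) - (c * ρ y + ρ t') = 0 := h
      linarith
  refine ⟨x, (key x).2 hx, fun y hy => hmonoφ.injective ?_⟩
  rw [(key y).1 hy, hx]

/-- Tschetweruchin's generalized ternary operation: let `ρ` be an odd increasing
bijection of `ℝ` with `ρ 0 = 0` and `ρ 1 = 1`, and let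
`τ(s,x,t) = s·x + t` for `s ≥ 0` and `τ(s,x,t) = ρ⁻¹(ρ s · ρ x + ρ t)` for `s < 0`.
Then two lines of different slopes intersect in exactly one point. -/
theorem stmt15 (ρ : ℝ ≃ ℝ) (hmono : StrictMono ρ)
    (hodd : ∀ x : ℝ, ρ (-x) = -ρ x) (h0 : ρ 0 = 0) (h1 : ρ 1 = 1)
    (τ : ℝ → ℝ → ℝ → ℝ)
    (hτ : ∀ s x t : ℝ, τ s x t = if 0 ≤ s then s * x + t else ρ.symm (ρ s * ρ x + ρ t))
    (s₁ s₂ t₁ t₂ : ℝ) (hs : s₁ ≠ s₂) :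
    ∃! x : ℝ, τ s₁ x t₁ = τ s₂ x t₂ := by
  rcases le_or_gt 0 s₁ with hs₁ | hs₁ <;> rcases le_or_gt 0 s₂ with hs₂ | hs₂
  · -- both nonneg: linear
    have hd : s₁ - s₂ ≠ 0 := sub_ne_zero.2 hs
    refine ⟨(t₂ - t₁) / (s₁ - s₂), ?_, ?_⟩
    · show τ s₁ ((t₂ - t₁) / (s₁ - s₂)) t₁ = τ s₂ ((t₂ - t₁) / (s₁ - s₂)) t₂
      rw [hτ, hτ, if_pos hs₁, if_pos hs₂]
      field_simp
      ring
    · intro y hy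
      have hy' : τ s₁ y t₁ = τ s₂ y t₂ := hy
      rw [hτ, hτ, if_pos hs₁, if_pos hs₂] at hy'
      field_simp
      nlinarith [hy']
  · -- s₁ ≥ 0, s₂ < 0
    obtain ⟨x, hx, hu⟩ := mixed15 ρ hmono h0 s₁ s₂ t₁ t₂ hs₁ hs₂
    refine ⟨x, ?_, fun y hy => hu y ?_⟩
    · show τ s₁ x t₁ = τ s₂ x t₂
      rw [hτ, hτ, if_pos hs₁, if_neg (not_le.2 hs₂)]; exact hx
    · have hy' : τ s₁ y t₁ = τ s₂ y t₂ := hy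
      rw [hτ, hτ, if_pos hs₁, if_neg (not_le.2 hs₂)] at hy'
      exact hy'
  · -- s₁ < 0, s₂ ≥ 0
    obtain ⟨x, hx, hu⟩ := mixed15 ρ hmono h0 s₂ s₁ t₂ t₁ hs₂ hs₁
    refine ⟨x, ?_, fun y hy => hu y ?_⟩
    · show τ s₁ x t₁ = τ s₂ x t₂
      rw [hτ, hτ, if_pos hs₂, if_neg (not_le.2 hs₁)]; exact hx.symm
    · have hy' : τ s₁ y t₁ = τ s₂ y t₂ := hy
      rw [hτ, hτ, if_pos hs₂, if_neg (not_le.2 hs₁)] at hy'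
      exact hy'.symm
  · -- both neg
    have hρs : ρ s₁ ≠ ρ s₂ := fun h => hs (ρ.injective h)
    have hd : ρ s₁ - ρ s₂ ≠ 0 := sub_ne_zero.2 hρs
    have key : ∀ y : ℝ, τ s₁ y t₁ = τ s₂ y t₂ ↔ ρ y = (ρ t₂ - ρ t₁) / (ρ s₁ - ρ s₂) := by
      intro y
      rw [hτ, hτ, if_neg (not_le.2 hs₁), if_neg (not_le.2 hs₂),
        ρ.symm.apply_eq_iff_eq]
      constructor
      · intro h
        field_simp
        nlinarith [h]
      · intro h
        rw [h]; field_simp; ring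
    refine ⟨ρ.symm ((ρ t₂ - ρ t₁) / (ρ s₁ - ρ s₂)), ?_, fun y hy => ?_⟩
    · show τ s₁ _ t₁ = τ s₂ _ t₂
      rw [key]; exact ρ.apply_symm_apply _
    · have hy' : τ s₁ y t₁ = τ s₂ y t₂ := hy
      have := (key y).1 hy'
      rw [← this]; exact (ρ.symm_apply_apply y).symm
end

section
/- For every real t and every octonion a, t·(conj(a)·a) + (1−t)·(a·conj(a)) = |a|², and the set of absolute affine points of the standard polarity of the mutated octonion plane, namely {(a,b) ∈ 𝕆² : conj(a) ∘ a = b + conj(b)}, equals {(a,b) : |a|² = 2·Re(b)}, which is homeomorphic to 𝕆 × ℝ⁷ ≅ ℝ¹⁵ via (a,b) ↦ (a, Im b). -/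
open Quaternion

/-- The real octonions, realized via the Cayley–Dickson construction on the quaternions. -/
abbrev Octo : Type := ℍ[ℝ] × ℍ[ℝ]

/-- Octonion multiplication (Cayley–Dickson doubling of the quaternions). -/
noncomputable def omul (x y : Octo) : Octo :=
  (x.1 * y.1 - star y.2 * x.2, y.2 * x.1 + x.2 * star y.1)

/-- Octonion conjugation. -/
noncomputable def oconj (x : Octo) : Octo := (star x.1, -x.2)

/-- The real part of an octonion. -/
def ore (x : Octo) : ℝ := x.1.re

/-- The imaginary part of an octonion. -/
noncomputable def oim (x : Octo) : Octo := (x.1 - ((x.1.re : ℝ) : ℍ[ℝ]), x.2)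

/-- The squared norm `|a|²` of an octonion. -/
noncomputable def onormSq (x : Octo) : ℝ := Quaternion.normSq x.1 + Quaternion.normSq x.2

/-- The canonical embedding of `ℝ` into the octonions. -/
noncomputable def ocoe (r : ℝ) : Octo := (((r : ℝ) : ℍ[ℝ]), 0)

lemma key (t : ℝ) (a : Octo) :
    t • omul (oconj a) a + (1 - t) • omul a (oconj a) = ocoe (onormSq a) := by
  have h1 : omul (oconj a) a = ocoe (onormSq a) := by
    simp only [omul, oconj, ocoe, onormSq, Prod.mk.injEq]
    constructor
    · rw [mul_neg, sub_neg_eq_add, Quaternion.star_mul_self, Quaternion.star_mul_self]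
      push_cast; rfl
    · rw [neg_mul, add_neg_cancel]
  have h2 : omul a (oconj a) = ocoe (onormSq a) := by
    simp only [omul, oconj, ocoe, onormSq, Prod.mk.injEq, star_star, star_neg]
    constructor
    · rw [neg_mul, sub_neg_eq_add, Quaternion.self_mul_star, Quaternion.star_mul_self]
      push_cast; rfl
    · rw [neg_mul, neg_add_cancel]
  rw [h1, h2, ← add_smul]
  simp

lemma cond_iff (t : ℝ) (p : Octo × Octo) :
    t • omul (oconj p.1) p.1 + (1 - t) • omul p.1 (oconj p.1) = p.2 + oconj p.2 ↔
      onormSq p.1 = 2 * ore p.2 := by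
  rw [key, show p.2 + oconj p.2 = ocoe (2 * ore p.2) by
    simp [oconj, ocoe, ore, Prod.ext_iff, Quaternion.self_add_star']]
  constructor
  · intro h
    have := congrArg Prod.fst h
    simp only [ocoe] at this
    exact Quaternion.coe_injective (by exact_mod_cast this)
  · intro h; rw [h]

lemma ore_add (x y : Octo) : ore (x + y) = ore x + ore y := by
  simp [ore, Prod.fst_add]

lemma ore_ocoe (r : ℝ) : ore (ocoe r) = r := by simp [ore, ocoe]

lemma continuous_oim : Continuous oim := by
  unfold oim
  exact ((continuous_fst.sub (Quaternion.continuous_coe.comp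
    (Quaternion.continuous_re.comp continuous_fst))).prodMk continuous_snd)

lemma continuous_ocoe : Continuous ocoe :=
  Quaternion.continuous_coe.prodMk continuous_const

lemma continuous_onormSq : Continuous onormSq :=
  (Quaternion.continuous_normSq.comp continuous_fst).add
    (Quaternion.continuous_normSq.comp continuous_snd)

lemma recover (r : ℝ) (b : Octo) (hb : ore b = r) : ocoe r + oim b = b := by
  apply Prod.ext
  · show (r : ℍ[ℝ]) + (b.1 - ((b.1.re : ℝ) : ℍ[ℝ])) = b.1
    rw [← hb]; simp [ore]
  · show (0 : ℍ[ℝ]) + b.2 = b.2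
    exact zero_add _
lemma oim_shift (r : ℝ) (x : Octo) (hx : ore x = 0) : oim (ocoe r + x) = x := by
  apply Prod.ext
  · show ((r : ℍ[ℝ]) + x.1) - ((((r : ℍ[ℝ]) + x.1).re : ℝ) : ℍ[ℝ]) = x.1
    have : ((r : ℍ[ℝ]) + x.1).re = r := by simp [ore] at hx; simp [hx]
    rw [this]; exact add_sub_cancel_left _ _
  · show (0 : ℍ[ℝ]) + x.2 = x.2
    exact zero_add _

/-- For every real `t` and octonion `a`, the mutated product satisfies
`t·(conj a · a) + (1−t)·(a · conj a) = |a|²`; the set of absolute affine points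
`{(a,b) : conj a ∘ a = b + conj b}` of the standard polarity of the mutated octonion
plane equals `{(a,b) : |a|² = 2·Re b}`, and this set is homeomorphic to
`𝕆 × ℝ⁷` (the latter realized as `𝕆 × {x : 𝕆 | Re x = 0}`) via `(a,b) ↦ (a, Im b)`. -/
theorem stmt19 :
    (∀ (t : ℝ) (a : Octo),
      t • omul (oconj a) a + (1 - t) • omul a (oconj a) = ocoe (onormSq a)) ∧
    (∀ t : ℝ,
      {p : Octo × Octo |
          t • omul (oconj p.1) p.1 + (1 - t) • omul p.1 (oconj p.1) = p.2 + oconj p.2} =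
        {p : Octo × Octo | onormSq p.1 = 2 * ore p.2}) ∧
    (∀ t : ℝ, ∃ h :
        {p : Octo × Octo //
          t • omul (oconj p.1) p.1 + (1 - t) • omul p.1 (oconj p.1) = p.2 + oconj p.2} ≃ₜ
        Octo × {x : Octo // ore x = 0},
      ∀ p, (h p).1 = (p : Octo × Octo).1 ∧ ((h p).2 : Octo) = oim (p : Octo × Octo).2) := by
  refine ⟨key, fun t => Set.ext fun p => cond_iff t p, fun t => ?_⟩
  refine ⟨{
    toFun := fun p => (p.1.1, ⟨oim p.1.2, by simp [ore, oim]⟩)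
    invFun := fun q => ⟨(q.1, ocoe (onormSq q.1 / 2) + q.2.1), by
      rw [cond_iff]
      show onormSq q.1 = 2 * ore (ocoe (onormSq q.1 / 2) + (q.2 : Octo))
      rw [ore_add, ore_ocoe, q.2.2]; ring⟩
    left_inv := fun p => by
      have hp := (cond_iff t p.1).mp p.2
      apply Subtype.ext
      apply Prod.ext
      · rfl
      · exact recover (onormSq p.1.1 / 2) p.1.2 (by rw [hp]; ring)
    right_inv := fun q => by
      apply Prod.ext
      · rfl
      · exact Subtype.ext (oim_shift _ _ q.2.2)
    continuous_toFun := by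
      refine Continuous.prodMk (continuous_fst.comp continuous_subtype_val) ?_
      exact Continuous.subtype_mk
        (continuous_oim.comp (continuous_snd.comp continuous_subtype_val)) _
    continuous_invFun := by
      refine Continuous.subtype_mk (Continuous.prodMk continuous_fst ?_) _
      exact ((continuous_ocoe.comp ((continuous_onormSq.comp continuous_fst).div_const 2)).add
        (continuous_subtype_val.comp continuous_snd))
  }, fun p => ⟨rfl, rfl⟩⟩
end
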